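/- Let δ be a symbolic 3-dissimilarity on X that is representable by a labelled level-1 network. Then δ satisfies Property (P3): any two δ-tricycles in the same connected component of C(δ) have the same δ-value on their leaf sets. -/

import Mathlib

/-- A rooted phylogenetic network on leaf set `X`: a rooted DAG whose leaves are
identified with `X`, with no vertex of indegree one and outdegree one. -/
structure PhyloNetwork (X : Type) [Fintype X] [DecidableEq X] where
  V : Type
  [instFin : Fintype V]
  [instDec : DecidableEq V]
  adj : V → V → Prop
  root : V
  leaf : X → V
  acyclic : ∀ v : V, ¬ Relation.TransGen adj v v
  root_no_in : ∀ u : V, ¬ adj u root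
  connected : ∀ v : V, Relation.ReflTransGen adj root v
  leaf_inj : Function.Injective leaf
  leaf_no_out : ∀ (x : X) (w : V), ¬ adj (leaf x) w
  leaves_only : ∀ v : V, (∀ w : V, ¬ adj v w) → v = root ∨ ∃ x, leaf x = v
  no_inout_one : ∀ v : V, ¬ ((∃! u : V, adj u v) ∧ (∃! w : V, adj v w))

namespace PhyloNetwork

variable {X : Type} [Fintype X] [DecidableEq X]

/-- Reachability by a directed path. -/
def reaches (N : PhyloNetwork X) : N.V → N.V → Prop := Relation.ReflTransGen N.adj

/-- The offspring set of a vertex: all leaves below it. -/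
def F (N : PhyloNetwork X) (v : N.V) : Set X := {x | N.reaches v (N.leaf x)}

/-- `v` is a leaf vertex. -/
def IsLeafV (N : PhyloNetwork X) (v : N.V) : Prop := ∃ x, N.leaf x = v

/-- `v` is a lowest common ancestor of the set `Y` of leaves. -/
def IsLca (N : PhyloNetwork X) (Y : Finset X) (v : N.V) : Prop :=
  (∀ x ∈ Y, x ∈ N.F v) ∧ ∀ w : N.V, N.adj v w → ¬ (∀ x ∈ Y, x ∈ N.F w)

/-- A cycle of a (level-1) network: two edge-disjoint, internally vertex-disjoint
directed paths from a root `r` to a hybrid `h`, with at least 3 vertices in total.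
`side1` and `side2` list the internal vertices of the two sides in order. -/
structure NCycle (N : PhyloNetwork X) where
  r : N.V
  h : N.V
  side1 : List N.V
  side2 : List N.V
  chain1 : List.Chain N.adj r (side1 ++ [h])
  chain2 : List.Chain N.adj r (side2 ++ [h])
  ne : r ≠ h
  nodup1 : (r :: (side1 ++ [h])).Nodup
  nodup2 : (r :: (side2 ++ [h])).Nodup
  disj : ∀ v ∈ side1, v ∉ side2
  nontriv : side1 ≠ [] ∨ side2 ≠ []

/-- The vertex set of a cycle. -/
def NCycle.verts {N : PhyloNetwork X} (C : NCycle N) : Set N.V :=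
  {C.r, C.h} ∪ {v | v ∈ C.side1} ∪ {v | v ∈ C.side2}

/-- A level-1 network: every vertex belongs to at most one cycle. -/
def IsLevelOne (N : PhyloNetwork X) : Prop :=
  ∀ C C' : NCycle N, ∀ v : N.V, v ∈ C.verts → v ∈ C'.verts → C.verts = C'.verts

/-- `R(C)`: the leaves below the root of the cycle `C`. -/
def NCycle.RC {N : PhyloNetwork X} (C : NCycle N) : Set X := N.F C.r

/-- `H(C)`: the leaves below the hybrid of the cycle `C`. -/
def NCycle.HC {N : PhyloNetwork X} (C : NCycle N) : Set X := N.F C.h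

/-- `v` is the last ancestor `v_C(x)` of the leaf `x` lying in the cycle `C`. -/
def NCycle.LastAnc {N : PhyloNetwork X} (C : NCycle N) (v : N.V) (x : X) : Prop :=
  v ∈ C.verts ∧ N.reaches v (N.leaf x) ∧
    ∀ w ∈ C.verts, N.reaches w (N.leaf x) → N.reaches w v

end PhyloNetwork

/-- A symbolic 3-dissimilarity on `X` with values in `M ∪ {⊙}` (`⊙` = `none`):
singletons get `⊙`, sets of size 2 or 3 get values in `M`. -/
structure SymbolicDissim3 (X M : Type) [DecidableEq X] where
  val : Finset X → Option M
  singleton_none : ∀ A : Finset X, A.card = 1 → val A = none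
  pair_some : ∀ A : Finset X, A.card = 2 ∨ A.card = 3 → val A ≠ none

/-- The labelled network `(N,t)` represents `δ`: for every `Y ⊆ X` of size 2 or 3,
`δ(Y) = t(lca_N(Y))`. -/
def PhyloNetwork.Represents {X M : Type} [Fintype X] [DecidableEq X]
    (N : PhyloNetwork X) (t : N.V → M) (d : SymbolicDissim3 X M) : Prop :=
  ∀ Y : Finset X, Y.card = 2 ∨ Y.card = 3 → ∀ v : N.V, N.IsLca Y v → d.val Y = some (t v)

/-- `δ` is level-1 representable. -/
def SymbolicDissim3.LevelOneRepresentable {X M : Type} [Fintype X] [DecidableEq X]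
    (d : SymbolicDissim3 X M) : Prop :=
  ∃ (N : PhyloNetwork X) (t : N.V → M), N.IsLevelOne ∧ N.Represents t d

/-- `x||yz` is a `δ`-tricycle: `δ(x,y,z) = δ(y,z)` and either the three pairwise
values are pairwise distinct, or `δ(x,y) = δ(x,z) ≠ δ(y,z)`. -/
def SymbolicDissim3.IsTricycle {X M : Type} [DecidableEq X] [DecidableEq M]
    (d : SymbolicDissim3 X M) (x y z : X) : Prop :=
  x ≠ y ∧ x ≠ z ∧ y ≠ z ∧ d.val {x, y, z} = d.val {y, z} ∧
    ((({d.val {x, y}, d.val {x, z}, d.val {y, z}} : Finset (Option M)).card = 3) ∨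
      (d.val {x, y} = d.val {x, z} ∧ d.val {x, y} ≠ d.val {y, z}))

/-- A `δ`-tricycle, i.e. a vertex of the graph `C(δ)`. -/
structure SymbolicDissim3.Tricyc {X M : Type} [DecidableEq X] [DecidableEq M]
    (d : SymbolicDissim3 X M) where
  x : X
  y : X
  z : X
  isTricycle : d.IsTricycle x y z

/-- The leaf set `L(τ)` of a `δ`-tricycle. -/
def SymbolicDissim3.Tricyc.leaves {X M : Type} [DecidableEq X] [DecidableEq M]
    {d : SymbolicDissim3 X M} (τ : d.Tricyc) : Finset X := {τ.x, τ.y, τ.z}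

/-- Adjacency in the graph `C(δ)`: two `δ`-tricycles are adjacent iff their
leaf sets share exactly two elements. -/
def SymbolicDissim3.tricycAdj {X M : Type} [DecidableEq X] [DecidableEq M]
    (d : SymbolicDissim3 X M) (τ τ' : d.Tricyc) : Prop :=
  (τ.leaves ∩ τ'.leaves).card = 2

/-- Property (P3): `δ`-tricycles in the same connected component of `C(δ)` have
the same `δ`-value on their leaf sets. -/
def SymbolicDissim3.PropP3 {X M : Type} [DecidableEq X] [DecidableEq M]
    (d : SymbolicDissim3 X M) : Prop :=
  ∀ τ τ' : d.Tricyc, Relation.ReflTransGen d.tricycAdj τ τ' →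
    d.val τ.leaves = d.val τ'.leaves

/-!
Let `(N, t)` be a level-1 representation of `δ` and `x‖yz` a tricycle whose triple has lca `v`.
Since `δ(x,y) ≠ δ(y,z) = δ(x,y,z) = t(v) ≠ δ(x,z)`, the vertex `v` is an lca neither of `{x,y}`
nor of `{x,z}`, so distinct children of `v` lie above these pairs; they close a cycle `C` rooted
at `v` whose hybrid is above `x` but not above `y` or `z`, and `v` is an lca of `{y,z}`. In a
level-1 network every vertex above a descendant of a hybrid is below the hybrid, on its cycle, or
above the cycle's root; hence every lca of `{x,y}` or `{x,z}` lies on `C`.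

Now let two tricycles share two leaves `P`. If `P` is the base `{y,z}` of both, their values both
equal `δ(P)`. Otherwise `P` contains the apex of one of them, so every lca of `P` lies on its
cycle, while the other cycle carries some lca of `P`. The two cycles share a vertex, hence (level 1)
have the same root, and both values equal the label of that root.
-/

open Relation

namespace List

variable {α : Type*} {R : α → α → Prop} {l : List α} {a b : α}

theorem IsChain.nodup_of_acyclic (hR : ∀ a, ¬ TransGen R a a) (h : IsChain R l) : l.Nodup :=
  (h.imp fun _ _ => TransGen.single).pairwise.imp fun hxy heq => by subst heq; exact hR _ hxy

theorem IsChain.reflTransGen_of_mem (h : IsChain R (a :: l)) (hb : b ∈ a :: l) :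
    ReflTransGen R a b := by
  rcases mem_cons.1 hb with rfl | hb
  · exact .refl
  · exact (pairwise_cons.1 (h.imp fun _ _ => ReflTransGen.single).pairwise).1 b hb

theorem IsChain.reflTransGen_of_head? (h : IsChain R l) (ha : l.head? = some a) (hb : b ∈ l) :
    ReflTransGen R a b := by
  obtain ⟨_, l⟩ | _ := l
  · simp at ha
  · obtain rfl := Option.some.inj ha
    exact h.reflTransGen_of_mem hb

theorem IsChain.reflTransGen_of_mem_concat (h : IsChain R (l ++ [b])) (ha : a ∈ l ++ [b]) :
    ReflTransGen R a b := by
  rcases mem_append.1 ha with ha | ha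
  · exact (pairwise_append.1 (h.imp fun _ _ => ReflTransGen.single).pairwise).2.2 a ha b
      (mem_singleton_self b)
  · rw [mem_singleton.1 ha]

theorem IsChain.exists_rel_of_mem (h : IsChain R (a :: l)) (hb : b ∈ l) :
    ∃ p ∈ a :: l, R p b := by
  induction l generalizing a with
  | nil => simp at hb
  | cons c l ih =>
    rw [isChain_cons_cons] at h
    rcases mem_cons.1 hb with rfl | hb
    · exact ⟨a, mem_cons_self, h.1⟩
    · obtain ⟨p, hp, hpb⟩ := ih h.2 hb
      exact ⟨p, mem_cons_of_mem a hp, hpb⟩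

/-- Cut an `R`-walk `c₂ ⇝ e` at its first vertex `h` lying on an `R`-walk `c₁ ⇝ e`. -/
theorem exists_disjoint_paths {v c₁ c₂ e : α} (h₁ : R v c₁) (h₂ : R v c₂) (hne : c₁ ≠ c₂)
    (he₁ : ReflTransGen R c₁ e) (he₂ : ReflTransGen R c₂ e) :
    ∃ (h : α) (s₁ s₂ : List α), IsChain R (v :: (s₁ ++ [h])) ∧ IsChain R (v :: (s₂ ++ [h])) ∧
      (∀ u ∈ s₁, u ∉ s₂) ∧ (s₁ ≠ [] ∨ s₂ ≠ []) ∧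
      (s₁ ++ [h]).head? = some c₁ ∧ (s₂ ++ [h]).head? = some c₂ ∧ ReflTransGen R h e := by
  classical
  obtain ⟨l₁, hc₁, hl₁⟩ := exists_isChain_cons_of_relationReflTransGen he₁
  obtain ⟨l₂, hc₂, hl₂⟩ := exists_isChain_cons_of_relationReflTransGen he₂
  obtain ⟨h, hfind⟩ : ∃ h, (c₂ :: l₂).find? (· ∈ c₁ :: l₁) = some h :=
    Option.isSome_iff_exists.1 <| find?_isSome.2
      ⟨e, hl₂ ▸ getLast_mem _, decide_eq_true (hl₁ ▸ getLast_mem _)⟩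
  obtain ⟨hh, s₂, t₂, hsplit₂, hs₂⟩ := find?_eq_some_iff_append.1 hfind
  obtain ⟨s₁, t₁, hsplit₁⟩ := append_of_mem (of_decide_eq_true hh)
  have hp₁ : IsChain R (v :: (s₁ ++ h :: t₁)) := hsplit₁ ▸ hc₁.cons_cons h₁
  have hp₂ : IsChain R (v :: (s₂ ++ h :: t₂)) := hsplit₂ ▸ hc₂.cons_cons h₂
  refine ⟨h, s₁, s₂, hp₁.infix ⟨[], t₁, by simp⟩, hp₂.infix ⟨[], t₂, by simp⟩,
    fun u hu₁ hu₂ => ?_, ?_, ?_, ?_, ?_⟩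
  · simpa [hsplit₁, hu₁] using hs₂ u hu₂
  · by_contra! hnil
    obtain ⟨rfl, rfl⟩ := hnil
    simp only [nil_append, cons.injEq] at hsplit₁ hsplit₂
    exact hne (hsplit₁.1.trans hsplit₂.1.symm)
  · cases s₁ <;> simp_all
  · cases s₂ <;> simp_all
  · exact hc₁.backwards_cons_induction (ReflTransGen R · e) l₁ hl₁ (fun _ _ => .head) .refl h
      (hsplit₁ ▸ by simp)

end List

theorem Relation.wellFounded_transGen_of_acyclic {α : Type*} [Finite α] {R : α → α → Prop}
    (hR : ∀ a, ¬ TransGen R a a) : WellFounded (TransGen R) :=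
  haveI : IsTrans α (TransGen R) := ⟨fun _ _ _ => TransGen.trans⟩
  haveI : Std.Irrefl (TransGen R) := ⟨hR⟩
  Finite.wellFounded_of_trans_of_irrefl _

namespace PhyloNetwork

attribute [local instance] PhyloNetwork.instFin

variable {X : Type} [Fintype X] [DecidableEq X] {N : PhyloNetwork X}

theorem reaches_antisymm {a b : N.V} (hab : N.reaches a b) (hba : N.reaches b a) : a = b := by
  by_contra hne
  obtain rfl | hab := reflTransGen_iff_eq_or_transGen.1 hab
  · exact hne rfl
  · exact N.acyclic a (hab.trans_left hba)

theorem F_subset_F {a b : N.V} (h : N.reaches a b) : N.F b ⊆ N.F a :=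
  fun _ hx => h.trans hx

theorem wellFounded_transGen : WellFounded (TransGen N.adj) :=
  wellFounded_transGen_of_acyclic N.acyclic

theorem exists_isLca (Y : Finset X) : ∃ v, N.IsLca Y v := by
  have hacyc : ∀ a, ¬ TransGen (Function.swap N.adj) a a := fun a h =>
    N.acyclic a (transGen_swap.1 h)
  obtain ⟨v, hv, hmin⟩ := (wellFounded_transGen_of_acyclic hacyc).has_min
    {u | ∀ x ∈ Y, x ∈ N.F u} ⟨N.root, fun _ _ => N.connected _⟩
  exact ⟨v, hv, fun w hvw hw => hmin w hw (.single hvw)⟩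

theorem exists_adj_of_not_isLca {Y : Finset X} {v : N.V} (hY : ∀ x ∈ Y, x ∈ N.F v)
    (hv : ¬ N.IsLca Y v) : ∃ c, N.adj v c ∧ ∀ x ∈ Y, x ∈ N.F c := by
  by_contra! h
  exact hv ⟨hY, fun w hvw hw => by obtain ⟨x, hx, hxw⟩ := h w hvw; exact hxw (hw x hx)⟩

namespace NCycle

theorem mem_verts_iff {C : NCycle N} {u : N.V} :
    u ∈ C.verts ↔ u ∈ C.r :: (C.side1 ++ [C.h]) ∨ u ∈ C.r :: (C.side2 ++ [C.h]) := by
  simp [verts]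
  tauto

theorem r_mem_verts (C : NCycle N) : C.r ∈ C.verts := mem_verts_iff.2 (by simp)

theorem h_mem_verts (C : NCycle N) : C.h ∈ C.verts := mem_verts_iff.2 (by simp)

theorem r_reaches_of_mem {C : NCycle N} {u : N.V} (hu : u ∈ C.verts) : N.reaches C.r u := by
  rcases mem_verts_iff.1 hu with hu | hu
  · exact List.IsChain.reflTransGen_of_mem C.chain1 hu
  · exact List.IsChain.reflTransGen_of_mem C.chain2 hu

theorem reaches_h_of_mem {C : NCycle N} {u : N.V} (hu : u ∈ C.verts) : N.reaches u C.h := by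
  rcases mem_verts_iff.1 hu with hu | hu
  · exact List.IsChain.reflTransGen_of_mem_concat (l := C.r :: C.side1) C.chain1 hu
  · exact List.IsChain.reflTransGen_of_mem_concat (l := C.r :: C.side2) C.chain2 hu

theorem exists_adj_of_mem {C : NCycle N} {u : N.V} (hu : u ∈ C.verts) (hur : u ≠ C.r) :
    ∃ p ∈ C.verts, N.adj p u := by
  rcases mem_verts_iff.1 hu with hu | hu
  · obtain ⟨p, hp, hpu⟩ :=
      List.IsChain.exists_rel_of_mem C.chain1 ((List.mem_cons.1 hu).resolve_left hur)
    exact ⟨p, mem_verts_iff.2 (.inl hp), hpu⟩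
  · obtain ⟨p, hp, hpu⟩ :=
      List.IsChain.exists_rel_of_mem C.chain2 ((List.mem_cons.1 hu).resolve_left hur)
    exact ⟨p, mem_verts_iff.2 (.inr hp), hpu⟩

theorem r_of_forall_adj {C : NCycle N} {S : N.V → Prop}
    (hS : ∀ u ∈ C.verts, u ≠ C.r → S u → ∀ p, N.adj p u → S p) {u : N.V} (hu : u ∈ C.verts)
    (hSu : S u) : S C.r := by
  induction u using wellFounded_transGen.induction with
  | _ u ih =>
    by_cases hur : u = C.r
    · exact hur ▸ hSu
    obtain ⟨p, hp, hpu⟩ := exists_adj_of_mem hu hur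
    exact ih p (.single hpu) hp (hS u hu hur hSu p hpu)

def ofChains {r h : N.V} {s₁ s₂ : List N.V} (hc₁ : List.IsChain N.adj (r :: (s₁ ++ [h])))
    (hc₂ : List.IsChain N.adj (r :: (s₂ ++ [h]))) (hdisj : ∀ u ∈ s₁, u ∉ s₂)
    (hnt : s₁ ≠ [] ∨ s₂ ≠ []) : NCycle N where
  r := r
  h := h
  side1 := s₁
  side2 := s₂
  chain1 := hc₁
  chain2 := hc₂
  ne := fun hrh => (List.nodup_cons.1 (hc₁.nodup_of_acyclic N.acyclic)).1 (by simp [hrh])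
  nodup1 := hc₁.nodup_of_acyclic N.acyclic
  nodup2 := hc₂.nodup_of_acyclic N.acyclic
  disj := hdisj
  nontriv := hnt

end NCycle

open NCycle

theorem exists_cycle_of_two_children {v c₁ c₂ e : N.V} (h₁ : N.adj v c₁) (h₂ : N.adj v c₂)
    (hne : c₁ ≠ c₂) (he₁ : N.reaches c₁ e) (he₂ : N.reaches c₂ e) :
    ∃ C : NCycle N, C.r = v ∧ N.reaches c₁ C.h ∧ N.reaches c₂ C.h ∧ N.reaches C.h e ∧
      c₂ ∈ C.verts ∧ ∀ u ∈ C.verts, u = v ∨ N.reaches c₁ u ∨ N.reaches c₂ u := by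
  obtain ⟨h, s₁, s₂, hc₁, hc₂, hdisj, hnt, hd₁, hd₂, he⟩ :=
    List.exists_disjoint_paths h₁ h₂ hne he₁ he₂
  have hr₁ : ∀ u ∈ s₁ ++ [h], N.reaches c₁ u := fun _ => hc₁.tail.reflTransGen_of_head? hd₁
  have hr₂ : ∀ u ∈ s₂ ++ [h], N.reaches c₂ u := fun _ => hc₂.tail.reflTransGen_of_head? hd₂
  refine ⟨ofChains hc₁ hc₂ hdisj hnt, rfl, hr₁ _ List.mem_concat_self,
    hr₂ _ List.mem_concat_self, he,
    mem_verts_iff.2 (.inr (List.mem_cons_of_mem _ (List.mem_of_mem_head? hd₂))), fun u hu => ?_⟩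
  rcases mem_verts_iff.1 hu with hu | hu <;> rcases List.mem_cons.1 hu with rfl | hu
  · exact .inl rfl
  · exact .inr (.inl (hr₁ _ hu))
  · exact .inl rfl
  · exact .inr (.inr (hr₂ _ hu))

/-- The cycle is built from disjoint paths for the reversed relation, starting at the root. -/
theorem exists_cycle_of_two_parents {p₁ p₂ b : N.V} (h₁ : N.adj p₁ b) (h₂ : N.adj p₂ b)
    (hne : p₁ ≠ p₂) : ∃ C : NCycle N, C.h = b ∧ p₁ ∈ C.verts ∧ p₂ ∈ C.verts := by
  obtain ⟨r, s₁, s₂, hc₁, hc₂, hdisj, hnt, hd₁, hd₂, -⟩ :=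
    List.exists_disjoint_paths (R := Function.swap N.adj) (e := N.root) h₁ h₂ hne
      (reflTransGen_swap.2 (N.connected p₁)) (reflTransGen_swap.2 (N.connected p₂))
  have reverse {s : List N.V} (hc : List.IsChain (Function.swap N.adj) (b :: (s ++ [r]))) :
      List.IsChain N.adj (r :: (s.reverse ++ [b])) := by
    simpa using List.isChain_reverse.2 hc
  refine ⟨ofChains (reverse hc₁) (reverse hc₂) (by simpa using hdisj) (by simpa using hnt), rfl,
    mem_verts_iff.2 (.inl ?_), mem_verts_iff.2 (.inr ?_)⟩
  · show p₁ ∈ r :: (s₁.reverse ++ [b])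
    have := List.mem_of_mem_head? hd₁
    simp at this ⊢
    tauto
  · show p₂ ∈ r :: (s₂.reverse ++ [b])
    have := List.mem_of_mem_head? hd₂
    simp at this ⊢
    tauto

end PhyloNetwork

namespace PhyloNetwork.IsLevelOne

open NCycle

variable {X : Type} [Fintype X] [DecidableEq X] {N : PhyloNetwork X}

theorem r_eq_of_mem (hN : N.IsLevelOne) {C C' : NCycle N} {u : N.V} (hu : u ∈ C.verts)
    (hu' : u ∈ C'.verts) : C.r = C'.r := by
  have hCC' := hN C C' u hu hu'
  exact reaches_antisymm (r_reaches_of_mem (hCC' ▸ C'.r_mem_verts))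
    (r_reaches_of_mem (hCC' ▸ C.r_mem_verts))

theorem h_eq_of_mem (hN : N.IsLevelOne) {C C' : NCycle N} {u : N.V} (hu : u ∈ C.verts)
    (hu' : u ∈ C'.verts) : C.h = C'.h := by
  have hCC' := hN C C' u hu hu'
  exact reaches_antisymm (reaches_h_of_mem (hCC' ▸ C.h_mem_verts))
    (reaches_h_of_mem (hCC' ▸ C'.h_mem_verts))

theorem mem_verts_of_adj (hN : N.IsLevelOne) {C : NCycle N} {p u : N.V} (hpu : N.adj p u)
    (hu : u ∈ C.verts) (hur : u ≠ C.r) : p ∈ C.verts := by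
  obtain ⟨q, hq, hqu⟩ := exists_adj_of_mem hu hur
  by_cases hpq : p = q
  · exact hpq ▸ hq
  obtain ⟨G, -, hpG, hqG⟩ := exists_cycle_of_two_parents hpu hqu hpq
  exact hN G C q hqG hq ▸ hpG

/-- Otherwise `p` and a parent `q` of `b` below `C.h` span a cycle `G` with hybrid `b`, disjoint
from `C`; walking up `G` from `q`, every vertex stays below `C.h` by induction, up to `G.r`. -/
theorem reaches_of_adj_of_reaches_h (hN : N.IsLevelOne) {C : NCycle N} {b p : N.V}
    (hb : N.reaches C.h b) (hbh : b ≠ C.h) (hpb : N.adj p b) : N.reaches C.h p := by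
  induction b using wellFounded_transGen.induction generalizing p with
  | _ b ih =>
    obtain ⟨q, hq, hqb⟩ :=
      TransGen.tail'_iff.1 ((reflTransGen_iff_eq_or_transGen.1 hb).resolve_left hbh)
    by_cases hpq : p = q
    · exact hpq ▸ hq
    obtain ⟨G, rfl, hpG, hqG⟩ := exists_cycle_of_two_parents hpb hqb hpq
    have hCG : C.h ∉ G.verts := fun h => hbh (hN.h_eq_of_mem h C.h_mem_verts)
    have hGr : N.reaches C.h G.r ∧ TransGen N.adj G.r G.h := by
      refine r_of_forall_adj (S := fun u => N.reaches C.h u ∧ TransGen N.adj u G.h)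
        (fun u hu _ hSu p hpu => ⟨?_, .head hpu hSu.2⟩) hqG ⟨hq, .single hqb⟩
      exact ih u hSu.2 hSu.1 (fun h => hCG (h ▸ hu)) hpu
    exact hGr.1.trans (r_reaches_of_mem hpG)

theorem reaches_h_or_mem_verts_or_reaches_r (hN : N.IsLevelOne) {C : NCycle N} {b u : N.V}
    (hb : N.reaches C.h b) (hu : N.reaches u b) :
    N.reaches C.h u ∨ u ∈ C.verts ∨ N.reaches u C.r := by
  induction hu using ReflTransGen.head_induction_on with
  | refl => exact .inl hb
  | @head u c huc _ ih =>
    rcases ih with hc | hc | hc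
    · by_cases hch : c = C.h
      · exact .inr (.inl (hN.mem_verts_of_adj huc (hch ▸ C.h_mem_verts) (hch ▸ C.ne.symm)))
      · exact .inl (hN.reaches_of_adj_of_reaches_h hc hch huc)
    · by_cases hcr : c = C.r
      · exact .inr (.inr (hcr ▸ .single huc))
      · exact .inr (.inl (hN.mem_verts_of_adj huc hc hcr))
    · exact .inr (.inr (.head huc hc))

theorem mem_verts_of_isLca (hN : N.IsLevelOne) {C : NCycle N} {Y : Finset X} {a b : X}
    (ha : a ∈ Y) (hb : b ∈ Y) (haC : a ∈ N.F C.h) (hbC : b ∉ N.F C.h)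
    (hY : ∀ x ∈ Y, x ∈ N.F C.r) (hr : ¬ N.IsLca Y C.r) {m : N.V} (hm : N.IsLca Y m) :
    m ∈ C.verts := by
  rcases hN.reaches_h_or_mem_verts_or_reaches_r haC (hm.1 a ha) with hm' | hm' | hm'
  · exact absurd (F_subset_F hm' (hm.1 b hb)) hbC
  · exact hm'
  · obtain rfl | hm' := reflTransGen_iff_eq_or_transGen.1 hm'
    · exact absurd hm hr
    · obtain ⟨c, hmc, hcr⟩ := TransGen.head'_iff.1 hm'
      exact absurd (fun x hx => F_subset_F hcr (hY x hx)) (hm.2 c hmc)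

end PhyloNetwork.IsLevelOne

theorem PhyloNetwork.Represents.val_eq_of_isLca {X M : Type} [Fintype X] [DecidableEq X]
    {N : PhyloNetwork X} {t : N.V → M} {d : SymbolicDissim3 X M} (hrep : N.Represents t d)
    {Y Y' : Finset X} (hY : Y.card = 2 ∨ Y.card = 3) (hY' : Y'.card = 2 ∨ Y'.card = 3)
    {v : N.V} (hv : N.IsLca Y v) (hv' : N.IsLca Y' v) : d.val Y = d.val Y' :=
  (hrep Y hY v hv).trans (hrep Y' hY' v hv').symm

namespace SymbolicDissim3

open PhyloNetwork NCycle

variable {X M : Type} [DecidableEq X] [DecidableEq M] {d : SymbolicDissim3 X M} {x y z : X}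

theorem IsTricycle.val_pair_ne (ht : d.IsTricycle x y z) :
    d.val {x, y} ≠ d.val {y, z} ∧ d.val {x, z} ≠ d.val {y, z} := by
  obtain ⟨-, -, -, -, h | ⟨hxy, hne⟩⟩ := ht
  · constructor <;> intro heq <;> rw [heq] at h <;> simp at h <;>
      exact absurd h (Finset.card_le_two.trans_lt (by norm_num : 2 < 3)).ne
  · exact ⟨hne, hxy ▸ hne⟩

theorem IsTricycle.card_eq_three (ht : d.IsTricycle x y z) : ({x, y, z} : Finset X).card = 3 :=
  Finset.card_eq_three.2 ⟨x, y, z, ht.1, ht.2.1, ht.2.2.1, rfl⟩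

variable [Fintype X] {N : PhyloNetwork X} {t : N.V → M}

/-- The children of `v` above `{x, y}` and above `{x, z}` are distinct and close the cycle. A
child `c₃` above `{y, z}` would close a second cycle at `v` with the first child, which by
level 1 is the same cycle; but `c₃` lies neither at `v` nor below either child. -/
theorem IsTricycle.isLca_and_exists_cycle (hN : N.IsLevelOne) (hrep : N.Represents t d)
    (ht : d.IsTricycle x y z) {v : N.V} (hv : N.IsLca {x, y, z} v) :
    N.IsLca {y, z} v ∧ ∃ C : NCycle N, C.r = v ∧ x ∈ N.F C.h ∧ y ∉ N.F C.h ∧ z ∉ N.F C.h := by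
  have hF : ∀ a ∈ ({x, y, z} : Finset X), a ∈ N.F v := hv.1
  simp only [Finset.mem_insert, Finset.mem_singleton, forall_eq_or_imp, forall_eq] at hF
  have hval {Y : Finset X} (hY : Y.card = 2) (hYv : N.IsLca Y v) : d.val Y = d.val {y, z} :=
    (hrep.val_eq_of_isLca (.inl hY) (.inr ht.card_eq_three) hYv hv).trans ht.2.2.2.1
  obtain ⟨c₁, hvc₁, hc₁⟩ := exists_adj_of_not_isLca (Y := {x, y}) (by simp [hF])
    fun h => ht.val_pair_ne.1 (hval (Finset.card_pair ht.1) h)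
  obtain ⟨c₂, hvc₂, hc₂⟩ := exists_adj_of_not_isLca (Y := {x, z}) (by simp [hF])
    fun h => ht.val_pair_ne.2 (hval (Finset.card_pair ht.2.1) h)
  simp only [Finset.mem_insert, Finset.mem_singleton, forall_eq_or_imp, forall_eq] at hc₁ hc₂
  have hzc₁ : z ∉ N.F c₁ := fun hz => hv.2 c₁ hvc₁ (by simp [hc₁, hz])
  have hyc₂ : y ∉ N.F c₂ := fun hy => hv.2 c₂ hvc₂ (by simp [hc₂, hy])
  obtain ⟨C, rfl, hc₁h, hc₂h, hhx, -, hcov⟩ :=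
    exists_cycle_of_two_children hvc₁ hvc₂ (fun h => hyc₂ (h ▸ hc₁.2)) hc₁.1 hc₂.1
  refine ⟨?_, C, rfl, hhx, fun hy => hyc₂ (F_subset_F hc₂h hy),
    fun hz => hzc₁ (F_subset_F hc₁h hz)⟩
  by_contra hyz
  obtain ⟨c₃, hvc₃, hc₃⟩ := exists_adj_of_not_isLca (Y := {y, z}) (by simp [hF]) hyz
  simp only [Finset.mem_insert, Finset.mem_singleton, forall_eq_or_imp, forall_eq] at hc₃
  obtain ⟨C', hC'r, -, -, -, hc₃C', -⟩ :=
    exists_cycle_of_two_children hvc₁ hvc₃ (fun h => hzc₁ (h ▸ hc₃.2)) hc₁.2 hc₃.1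
  have hc₃C : c₃ ∈ C.verts := hN C' C C.r (hC'r ▸ C'.r_mem_verts) C.r_mem_verts ▸ hc₃C'
  rcases hcov c₃ hc₃C with h | h | h
  · exact N.acyclic _ (.single (h ▸ hvc₃))
  · exact hzc₁ (F_subset_F h hc₃.2)
  · exact hyc₂ (F_subset_F h hc₃.1)

theorem IsTricycle.exists_cycle_isLca_pairs (hN : N.IsLevelOne) (hrep : N.Represents t d)
    (ht : d.IsTricycle x y z) :
    ∃ C : NCycle N, d.val {x, y, z} = some (t C.r) ∧ ∀ P ⊆ ({x, y, z} : Finset X), P.card = 2 →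
      (∃ m ∈ C.verts, N.IsLca P m) ∧ (P = {y, z} ∨ ∀ m, N.IsLca P m → m ∈ C.verts) := by
  obtain ⟨v, hv⟩ := N.exists_isLca {x, y, z}
  obtain ⟨hyz, C, rfl, hxC, hyC, hzC⟩ := ht.isLca_and_exists_cycle hN hrep hv
  refine ⟨C, hrep _ (.inr ht.card_eq_three) _ hv, fun P hP hcard => ?_⟩
  by_cases hxP : x ∈ P
  · obtain ⟨b, hbP, hbx⟩ := Finset.exists_mem_ne (by omega : 1 < P.card) x
    have hb : b = y ∨ b = z := by simpa [hbx] using hP hbP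
    have hPxb : P = {x, b} := (Finset.eq_of_subset_of_card_le
      (by simp [Finset.insert_subset_iff, hxP, hbP])
      (by rw [hcard, Finset.card_pair hbx.symm])).symm
    have hr : ¬ N.IsLca P C.r := fun h => by
      have hval := (hrep.val_eq_of_isLca (.inl hcard) (.inr ht.card_eq_three) h hv).trans
        ht.2.2.2.1
      rw [hPxb] at hval
      rcases hb with rfl | rfl
      exacts [ht.val_pair_ne.1 hval, ht.val_pair_ne.2 hval]
    have hcap : ∀ m, N.IsLca P m → m ∈ C.verts := fun m =>
      hN.mem_verts_of_isLca hxP hbP hxC (by rcases hb with rfl | rfl <;> assumption)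
        (fun a ha => hv.1 a (hP ha)) hr
    obtain ⟨m, hm⟩ := N.exists_isLca P
    exact ⟨⟨m, hcap m hm, hm⟩, .inr hcap⟩
  · have hPyz : P = {y, z} := by
      refine Finset.eq_of_subset_of_card_le (fun a ha => ?_) (hcard ▸ Finset.card_le_two)
      have := hP ha
      simp only [Finset.mem_insert, Finset.mem_singleton] at this ⊢
      exact this.resolve_left (by rintro rfl; exact hxP ha)
    exact ⟨⟨C.r, C.r_mem_verts, hPyz ▸ hyz⟩, .inl hPyz⟩

theorem val_leaves_eq_of_tricycAdj (hN : N.IsLevelOne) (hrep : N.Represents t d)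
    {τ τ' : d.Tricyc} (hadj : d.tricycAdj τ τ') : d.val τ.leaves = d.val τ'.leaves := by
  obtain ⟨C, hC, hCP⟩ := τ.isTricycle.exists_cycle_isLca_pairs hN hrep
  obtain ⟨C', hC', hC'P⟩ := τ'.isTricycle.exists_cycle_isLca_pairs hN hrep
  obtain ⟨⟨m, hmC, hm⟩, hP⟩ := hCP _ Finset.inter_subset_left hadj
  obtain ⟨⟨m', hm'C', hm'⟩, hP'⟩ := hC'P _ Finset.inter_subset_right hadj
  have of_common {u : N.V} (hu : u ∈ C.verts) (hu' : u ∈ C'.verts) :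
      d.val τ.leaves = d.val τ'.leaves := by
    rw [Tricyc.leaves, Tricyc.leaves, hC, hC', hN.r_eq_of_mem hu hu']
  rcases hP with hP | hcap
  · rcases hP' with hP' | hcap'
    · rw [Tricyc.leaves, Tricyc.leaves, τ.isTricycle.2.2.2.1, τ'.isTricycle.2.2.2.1]
      exact congrArg d.val (hP.symm.trans hP')
    · exact of_common hmC (hcap' m hm)
  · exact of_common (hcap m' hm') hm'C'

end SymbolicDissim3

theorem propP3_of_levelOneRepresentable_general {X M : Type}
    [Fintype X] [DecidableEq X] [DecidableEq M]
    (d : SymbolicDissim3 X M) (hrep : d.LevelOneRepresentable) :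
    d.PropP3 := by
  obtain ⟨N, t, hN, hrep⟩ := hrep
  intro τ τ' h
  induction h with
  | refl => rfl
  | tail _ hadj ih => exact ih.trans (SymbolicDissim3.val_leaves_eq_of_tricycAdj hN hrep hadj)

/-- A level-1 representable symbolic 3-dissimilarity satisfies Property (P3):
any two `δ`-tricycles in the same connected component of `C(δ)` have the same
`δ`-value on their leaf sets. -/
theorem propP3_of_levelOneRepresentable {X M : Type}
    [Fintype X] [DecidableEq X] [Fintype M] [DecidableEq M]
    (d : SymbolicDissim3 X M) (hrep : d.LevelOneRepresentable) :
    d.PropP3 :=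
  propP3_of_levelOneRepresentable_general d hrep
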